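/- arXiv:1704.02881 — 4 statements merged into one kernel-verified Lean document; each statement's English description precedes it below -/
import Mathlib

section
/- For any q, n ∈ ℕ, the unitary Ramanujan sum satisfies c*_q(n) = Σ_{d ∣∣ (n,q)_*} d · μ*(q/d), where μ*(m) = (−1)^{ω(m)}. -/
open Complex Finset

noncomputable section

/-- Number of distinct prime factors. -/
def omega (n : ℕ) : ℕ := n.primeFactors.card

/-- The unitary gcd `(k,q)_* = max {d : d ∣ k, d ∣∣ q}`. -/
def ugcd (k q : ℕ) : ℕ :=
  ((q.divisors).filter (fun d => d ∣ k ∧ Nat.Coprime d (q / d))).sup id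

/-- The set of unitary divisors of `q`. -/
def unitaryDivisors (q : ℕ) : Finset ℕ :=
  q.divisors.filter (fun d => Nat.Coprime d (q / d))

/-- The unitary Ramanujan sum `c*_q(n)`. -/
def cstar (q n : ℕ) : ℂ :=
  ∑ k ∈ Finset.Icc 1 q,
    if ugcd k q = 1 then Complex.exp (2 * Real.pi * Complex.I * k * n / q) else 0

/-- The classical Ramanujan sum `c_q(n)`. -/
def cc (q n : ℕ) : ℂ :=
  ∑ k ∈ Finset.Icc 1 q,
    if Nat.gcd k q = 1 then Complex.exp (2 * Real.pi * Complex.I * k * n / q) else 0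

/-- The unitary Möbius function `μ*(m) = (-1)^{ω(m)}`. -/
def mustar (m : ℕ) : ℤ := (-1) ^ omega m

/-! For a unitary divisor `d` of `q`, `d ∣ k` iff `d ∣∣ (k,q)_*`, and `d ↦ d.primeFactors`
identifies the unitary divisors of `m` with the subsets of the prime factors of `m`, so that
`∑_{d ∣∣ m} μ*(d) = [m = 1]`. Detecting `(k,q)_* = 1` by this sum and exchanging the order of
summation turns `c*_q(n)` into `∑_{d ∣∣ q} μ*(d) ∑_{k ≤ q, d ∣ k} ζ^{kn}` with `ζ` a primitive
`q`-th root of unity. The inner sum runs over all powers of the primitive `(q/d)`-th root `ζ^d`,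
so it is `q/d` if `q/d ∣ n` and `0` otherwise; substituting `d ↦ q/d` gives the formula. -/

lemma mem_unitaryDivisors {d q : ℕ} (hq : q ≠ 0) :
    d ∈ unitaryDivisors q ↔ d ∣ q ∧ Nat.Coprime d (q / d) := by
  simp [unitaryDivisors, hq]

lemma div_mem_unitaryDivisors {d q : ℕ} (hq : q ≠ 0) (hd : d ∈ unitaryDivisors q) :
    q / d ∈ unitaryDivisors q := by
  obtain ⟨hdq, hcop⟩ := (mem_unitaryDivisors hq).1 hd
  rw [mem_unitaryDivisors hq, Nat.div_div_self hdq hq]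
  exact ⟨Nat.div_dvd_of_dvd hdq, hcop.symm⟩

lemma sum_unitaryDivisors_comm {M : Type*} [AddCommMonoid M] {q : ℕ} (hq : q ≠ 0)
    (f : ℕ → ℕ → M) :
    ∑ d ∈ unitaryDivisors q, f d (q / d) = ∑ d ∈ unitaryDivisors q, f (q / d) d := by
  refine sum_nbij' (q / ·) (q / ·) (fun d hd => div_mem_unitaryDivisors hq hd)
    (fun d hd => div_mem_unitaryDivisors hq hd) (fun d hd => ?_) (fun d hd => ?_) (fun d hd => ?_)
  all_goals simp only [Nat.div_div_self ((mem_unitaryDivisors hq).1 hd).1 hq]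

lemma unitaryDivisors_eq_filter_dvd_of_mem {g q : ℕ} (hq : q ≠ 0) (hg : g ∈ unitaryDivisors q) :
    unitaryDivisors g = (unitaryDivisors q).filter (· ∣ g) := by
  obtain ⟨hgq, hgcop⟩ := (mem_unitaryDivisors hq).1 hg
  have hg0 : g ≠ 0 := ne_zero_of_dvd_ne_zero hq hgq
  ext d
  simp only [mem_filter, mem_unitaryDivisors hq, mem_unitaryDivisors hg0]
  constructor
  · rintro ⟨hdg, hdcop⟩
    refine ⟨⟨hdg.trans hgq, ?_⟩, hdg⟩
    rw [← Nat.div_mul_div hgq hdg]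
    exact (hgcop.coprime_dvd_left hdg).mul_right hdcop
  · rintro ⟨⟨-, hdcop⟩, hdg⟩
    exact ⟨hdg, hdcop.coprime_dvd_right (Dvd.intro_left _ (Nat.div_mul_div hgq hdg))⟩

lemma ugcd_eq_sup (k q : ℕ) : ugcd k q = ((unitaryDivisors q).filter (· ∣ k)).sup id := by
  simp only [ugcd, unitaryDivisors, filter_filter, and_comm]

lemma lcm_mem_unitaryDivisors_filter_dvd {k q : ℕ} (hq : q ≠ 0) :
    ((unitaryDivisors q).filter (· ∣ k)).lcm id ∈ (unitaryDivisors q).filter (· ∣ k) := by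
  set S := (unitaryDivisors q).filter (· ∣ k)
  -- `q / lcm S` divides every `q / d`, so it is coprime to each `d ∈ S`,
  -- hence to `∏ S` and to its divisor `lcm S`.
  have hLq : S.lcm id ∣ q := lcm_dvd fun d hd => ((mem_unitaryDivisors hq).1 (mem_filter.1 hd).1).1
  have hLk : S.lcm id ∣ k := lcm_dvd fun d hd => (mem_filter.1 hd).2
  have hcop : Nat.Coprime (∏ d ∈ S, d) (q / S.lcm id) := Nat.Coprime.prod_left fun d hd =>
    ((mem_unitaryDivisors hq).1 (mem_filter.1 hd).1).2.coprime_dvd_right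
      (Nat.div_dvd_div_left hLq (dvd_lcm hd))
  exact mem_filter.2
    ⟨(mem_unitaryDivisors hq).2 ⟨hLq, hcop.coprime_dvd_left (lcm_dvd_prod S id)⟩, hLk⟩

lemma ugcd_eq_lcm {k q : ℕ} (hq : q ≠ 0) :
    ugcd k q = ((unitaryDivisors q).filter (· ∣ k)).lcm id := by
  have hL := lcm_mem_unitaryDivisors_filter_dvd (k := k) hq
  have hL0 : 0 < ((unitaryDivisors q).filter (· ∣ k)).lcm id :=
    Nat.pos_of_mem_divisors (mem_filter.1 (mem_filter.1 hL).1).1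
  rw [ugcd_eq_sup]
  exact le_antisymm (Finset.sup_le fun d hd => Nat.le_of_dvd hL0 (dvd_lcm hd)) (le_sup (f := id) hL)

lemma unitaryDivisors_ugcd {k q : ℕ} (hq : q ≠ 0) :
    unitaryDivisors (ugcd k q) = (unitaryDivisors q).filter (· ∣ k) := by
  have hL := lcm_mem_unitaryDivisors_filter_dvd (k := k) hq
  rw [ugcd_eq_lcm hq, unitaryDivisors_eq_filter_dvd_of_mem hq (mem_filter.1 hL).1]
  ext d
  simp only [mem_filter, and_congr_right_iff]
  exact fun hd => ⟨fun h => h.trans (mem_filter.1 hL).2, fun h => dvd_lcm (mem_filter.2 ⟨hd, h⟩)⟩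

lemma ugcd_ne_zero {k q : ℕ} (hq : q ≠ 0) : ugcd k q ≠ 0 := by
  rw [ugcd_eq_lcm hq]
  exact (Nat.pos_of_mem_divisors (mem_filter.1 (mem_filter.1
    (lcm_mem_unitaryDivisors_filter_dvd hq)).1).1).ne'

/-- The unitary divisor of `m` whose prime factors are `S ⊆ m.primeFactors`. -/
def factorPart (m : ℕ) (S : Finset ℕ) : ℕ := ∏ p ∈ S, p ^ m.factorization p

lemma factorPart_primeFactors {m : ℕ} (hm : m ≠ 0) : factorPart m m.primeFactors = m := by
  rw [factorPart, ← Nat.support_factorization]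
  exact Nat.prod_factorization_pow_eq_self hm

lemma primeFactors_factorPart {m : ℕ} {S : Finset ℕ} (hS : S ⊆ m.primeFactors) :
    (factorPart m S).primeFactors = S := by
  have hprime : ∀ p ∈ S, p.Prime := fun p hp => Nat.prime_of_mem_primeFactors (hS hp)
  ext p
  rw [Nat.mem_primeFactors]
  constructor
  · rintro ⟨hp, hdvd, -⟩
    obtain ⟨r, hr, hpr⟩ := (Prime.dvd_finsetProd_iff hp.prime _).1 hdvd
    rwa [(Nat.prime_dvd_prime_iff_eq hp (hprime r hr)).1 (hp.dvd_of_dvd_pow hpr)]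
  · intro hp
    obtain ⟨-, hpm, hm⟩ := Nat.mem_primeFactors.1 (hS hp)
    exact ⟨hprime p hp, (Nat.dvd_ordProj_of_dvd hm (hprime p hp) hpm).trans (dvd_prod_of_mem _ hp),
      prod_ne_zero_iff.2 fun r hr => pow_ne_zero _ (hprime r hr).ne_zero⟩

lemma factorPart_mem_unitaryDivisors {m : ℕ} (hm : m ≠ 0) {S : Finset ℕ}
    (hS : S ⊆ m.primeFactors) : factorPart m S ∈ unitaryDivisors m := by
  have hsplit : factorPart m S * factorPart m (m.primeFactors \ S) = m := by
    rw [factorPart, factorPart, ← prod_union disjoint_sdiff, union_sdiff_of_subset hS]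
    exact factorPart_primeFactors hm
  have hcop : Nat.Coprime (factorPart m S) (factorPart m (m.primeFactors \ S)) :=
    Nat.Coprime.prod_left fun p hp => Nat.Coprime.prod_right fun r hr =>
      ((Nat.coprime_primes (Nat.prime_of_mem_primeFactors (hS hp))
        (Nat.prime_of_mem_primeFactors (mem_sdiff.1 hr).1)).2
          fun h => (mem_sdiff.1 hr).2 (h ▸ hp)).pow _ _
  rw [mem_unitaryDivisors hm]
  refine ⟨Dvd.intro _ hsplit, ?_⟩
  rwa [Nat.div_eq_of_eq_mul_right (Nat.pos_of_ne_zero (left_ne_zero_of_mul (hsplit ▸ hm)))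
    hsplit.symm]

lemma factorPart_of_mem_unitaryDivisors {m d : ℕ} (hm : m ≠ 0) (hd : d ∈ unitaryDivisors m) :
    factorPart m d.primeFactors = d := by
  obtain ⟨hdm, hcop⟩ := (mem_unitaryDivisors hm).1 hd
  conv_rhs => rw [← factorPart_primeFactors (ne_zero_of_dvd_ne_zero hm hdm)]
  refine prod_congr rfl fun p hp => ?_
  rw [← Nat.mul_div_cancel' hdm, Nat.factorization_eq_of_coprime_left hcop
    (Nat.mem_primeFactors_iff_mem_primeFactorsList.1 hp)]

lemma sum_mustar_unitaryDivisors {m : ℕ} (hm : m ≠ 0) :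
    ∑ d ∈ unitaryDivisors m, mustar d = if m = 1 then 1 else 0 := by
  calc ∑ d ∈ unitaryDivisors m, mustar d = ∑ S ∈ m.primeFactors.powerset, (-1 : ℤ) ^ S.card :=
        sum_nbij' Nat.primeFactors (factorPart m)
          (fun d hd => mem_powerset.2 (Nat.primeFactors_mono ((mem_unitaryDivisors hm).1 hd).1 hm))
          (fun S hS => factorPart_mem_unitaryDivisors hm (mem_powerset.1 hS))
          (fun d hd => factorPart_of_mem_unitaryDivisors hm hd)
          (fun S hS => primeFactors_factorPart (mem_powerset.1 hS))
          (fun _ _ => rfl)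
    _ = if m = 1 then 1 else 0 := by
      simp [sum_powerset_neg_one_pow_card, Nat.primeFactors_eq_empty, hm]

lemma sum_mustar_unitaryDivisors_filter_dvd {k q : ℕ} (hq : q ≠ 0) :
    ∑ d ∈ (unitaryDivisors q).filter (· ∣ k), mustar d = if ugcd k q = 1 then 1 else 0 := by
  rw [← unitaryDivisors_ugcd hq, sum_mustar_unitaryDivisors (ugcd_ne_zero hq)]

lemma Nat.filter_dvd_Icc_one_eq_image {d : ℕ} (hd : d ≠ 0) (q : ℕ) :
    (Icc 1 q).filter (d ∣ ·) = (Icc 1 (q / d)).image (d * ·) := by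
  ext k
  simp only [mem_filter, mem_Icc, mem_image]
  constructor
  · rintro ⟨⟨hk1, hkq⟩, j, rfl⟩
    exact ⟨j, ⟨Nat.pos_of_ne_zero (right_ne_zero_of_mul (Nat.one_le_iff_ne_zero.1 hk1)),
      (Nat.le_div_iff_mul_le (Nat.pos_of_ne_zero hd)).2 (by rwa [mul_comm])⟩, rfl⟩
  · rintro ⟨j, ⟨hj1, hjq⟩, rfl⟩
    refine ⟨⟨Nat.one_le_iff_ne_zero.2 (mul_ne_zero hd (by omega)), ?_⟩, dvd_mul_right d j⟩
    exact (Nat.mul_le_mul_left d hjq).trans (Nat.mul_div_le q d)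

lemma IsPrimitiveRoot.sum_Icc_pow_mul {R : Type*} [CommRing R] [IsDomain R] {ζ : R} {e : ℕ}
    (hζ : IsPrimitiveRoot ζ e) (n : ℕ) :
    ∑ j ∈ Icc 1 e, ζ ^ (j * n) = if e ∣ n then (e : R) else 0 := by
  have hshift : ∑ j ∈ Icc 1 e, ζ ^ (j * n) = ζ ^ n * ∑ j ∈ range e, (ζ ^ n) ^ j := by
    rw [← Finset.Ico_add_one_right_eq_Icc, sum_Ico_eq_sum_range, mul_sum]
    refine sum_congr (by simp) fun j _ => ?_
    rw [← pow_mul, ← pow_add]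
    ring_nf
  rw [hshift]
  split_ifs with hdvd
  · simp [(hζ.pow_eq_one_iff_dvd n).2 hdvd]
  · have hne : ζ ^ n ≠ 1 := mt (hζ.pow_eq_one_iff_dvd n).1 hdvd
    have hgeom : (1 - ζ ^ n) * ∑ j ∈ range e, (ζ ^ n) ^ j = 0 := by
      rw [mul_neg_geom_sum, pow_right_comm, hζ.pow_eq_one, one_pow, sub_self]
    rw [(mul_eq_zero.1 hgeom).resolve_left (sub_ne_zero.2 hne.symm), mul_zero]

lemma IsPrimitiveRoot.sum_Icc_filter_dvd_pow_mul {R : Type*} [CommRing R] [IsDomain R] {ζ : R}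
    {q d : ℕ} (hζ : IsPrimitiveRoot ζ q) (hd : d ∣ q) (hd0 : d ≠ 0) (n : ℕ) :
    ∑ k ∈ (Icc 1 q).filter (d ∣ ·), ζ ^ (k * n) = if q / d ∣ n then ((q / d : ℕ) : R) else 0 := by
  rw [Nat.filter_dvd_Icc_one_eq_image hd0,
    sum_image fun _ _ _ _ h => Nat.eq_of_mul_eq_mul_left (Nat.pos_of_ne_zero hd0) h]
  simp only [mul_assoc, pow_mul ζ d]
  exact (hζ.pow_of_dvd hd0 hd).sum_Icc_pow_mul n

lemma exp_two_pi_I_mul_div (k n q : ℕ) :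
    exp (2 * Real.pi * I * k * n / q) = exp (2 * Real.pi * I / q) ^ (k * n) := by
  rw [← exp_nat_mul]
  push_cast
  ring_nf

theorem stmt1_general (q n : ℕ) :
    cstar q n = ∑ d ∈ unitaryDivisors (ugcd n q), (d : ℂ) * (mustar (q / d) : ℂ) := by
  rcases eq_or_ne q 0 with rfl | hq
  · simp [cstar, ugcd, unitaryDivisors]
  set ζ := exp (2 * Real.pi * I / q)
  have hζ : IsPrimitiveRoot ζ q := isPrimitiveRoot_exp q hq
  calc cstar q n
      = ∑ k ∈ Icc 1 q, ∑ d ∈ unitaryDivisors q,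
          if d ∣ k then (mustar d : ℂ) * ζ ^ (k * n) else 0 := by
        refine sum_congr rfl fun k _ => ?_
        rw [← sum_filter, ← sum_mul, ← Int.cast_sum, sum_mustar_unitaryDivisors_filter_dvd hq,
          exp_two_pi_I_mul_div]
        split_ifs <;> simp [ζ]
    _ = ∑ d ∈ unitaryDivisors q, (mustar d : ℂ) * ∑ k ∈ (Icc 1 q).filter (d ∣ ·), ζ ^ (k * n) := by
        rw [sum_comm]
        simp_rw [mul_sum, sum_filter]
    _ = ∑ d ∈ unitaryDivisors q, (mustar d : ℂ) * if q / d ∣ n then ((q / d : ℕ) : ℂ) else 0 :=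
        sum_congr rfl fun d hd => by
          have hdq := ((mem_unitaryDivisors hq).1 hd).1
          rw [hζ.sum_Icc_filter_dvd_pow_mul hdq (ne_zero_of_dvd_ne_zero hq hdq)]
    _ = ∑ d ∈ unitaryDivisors q, (mustar (q / d) : ℂ) * if d ∣ n then (d : ℂ) else 0 :=
        sum_unitaryDivisors_comm hq fun a b => (mustar a : ℂ) * if b ∣ n then (b : ℂ) else 0
    _ = ∑ d ∈ unitaryDivisors (ugcd n q), (d : ℂ) * (mustar (q / d) : ℂ) := by
        rw [unitaryDivisors_ugcd hq, sum_filter]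
        simp_rw [mul_ite, mul_zero, mul_comm]

theorem stmt1 (q n : ℕ) (hq : 1 ≤ q) (hn : 1 ≤ n) :
    cstar q n = ∑ d ∈ unitaryDivisors (ugcd n q), (d : ℂ) * (mustar (q / d) : ℂ) :=
  stmt1_general q n
end
end

section
/- For any q, n ∈ ℕ, Σ_{d ∣∣ q} |c*_d(n)| = 2^{ω(q/(n,q)_*)} · (n,q)_*. -/
open Complex Finset

noncomputable section

/-!
The unitary divisors of `q` are the products `∏_{p ∈ S} p ^ v_p(q)` over sets `S` of prime
factors of `q`. Inclusion–exclusion over them turns the condition `(k, q)_* = 1` into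
divisibility conditions, and the resulting sums of roots of unity give
`c*_q(n) = ∏_{p ∣ q} ([p ^ v_p(q) ∣ n] p ^ v_p(q) - 1)`, a product of factors `p ^ v_p(q) - 1`
and `-1`. Hence `∑_{d ∣∣ q} |c*_d(n)| = ∏_{p ∣ q} (1 + |c*_{p ^ v_p(q)}(n)|)`; its factors are
`p ^ v_p(q)` for the primes with `p ^ v_p(q) ∣ n`, which multiply to `(n, q)_*`, and `2` for the
`ω(q / (n, q)_*)` others.
-/

theorem sum_Icc_filter_dvd {M : Type*} [AddCommMonoid M] {d q : ℕ} (hd : d ∣ q) (hd0 : d ≠ 0)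
    (f : ℕ → M) : ∑ k ∈ Icc 1 q with d ∣ k, f k = ∑ j ∈ Icc 1 (q / d), f (d * j) := by
  have himage : {k ∈ Icc 1 q | d ∣ k} = (Icc 1 (q / d)).image (d * ·) := by
    ext k
    simp only [mem_filter, mem_Icc, mem_image]
    constructor
    · rintro ⟨⟨hk1, hkq⟩, j, rfl⟩
      refine ⟨j, ⟨?_, ?_⟩, rfl⟩
      · exact Nat.pos_of_ne_zero (by rintro rfl; simp at hk1)
      · exact (Nat.le_div_iff_mul_le (Nat.pos_of_ne_zero hd0)).2 (by linarith)
    · rintro ⟨j, ⟨hj1, hjq⟩, rfl⟩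
      refine ⟨⟨Nat.one_le_iff_ne_zero.2 (mul_ne_zero hd0 (by omega)), ?_⟩, dvd_mul_right d j⟩
      calc d * j ≤ d * (q / d) := Nat.mul_le_mul_left d hjq
        _ = q := Nat.mul_div_cancel' hd
  rw [himage, sum_image fun _ _ _ _ h => Nat.eq_of_mul_eq_mul_left (Nat.pos_of_ne_zero hd0) h]

section RootsOfUnity

variable {R : Type*} [CommRing R] [IsDomain R]

theorem sum_Icc_pow_eq_zero {z : R} {m : ℕ} (hz : z ^ m = 1) (h1 : z ≠ 1) :
    ∑ k ∈ Icc 1 m, z ^ k = 0 := by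
  have hshift : ∑ k ∈ Icc 1 m, z ^ k = z * ∑ k ∈ range m, z ^ k := by
    rw [mul_sum, ← Finset.Ico_add_one_right_eq_Icc, sum_Ico_eq_sum_range]
    simp [pow_succ', add_comm]
  have hgeom : (∑ k ∈ range m, z ^ k) * (z - 1) = 0 := by rw [geom_sum_mul, hz, sub_self]
  rw [hshift, (mul_eq_zero.1 hgeom).resolve_right (sub_ne_zero.2 h1), mul_zero]

theorem IsPrimitiveRoot.sum_Icc_pow_pow {ζ : R} {m : ℕ} (hζ : IsPrimitiveRoot ζ m) (n : ℕ) :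
    ∑ k ∈ Icc 1 m, (ζ ^ n) ^ k = if m ∣ n then (m : R) else 0 := by
  split_ifs with hdvd
  · simp [(hζ.pow_eq_one_iff_dvd n).2 hdvd]
  · refine sum_Icc_pow_eq_zero ?_ (mt (hζ.pow_eq_one_iff_dvd n).1 hdvd)
    rw [← pow_mul, mul_comm, pow_mul, hζ.pow_eq_one, one_pow]

theorem IsPrimitiveRoot.sum_Icc_filter_dvd_pow_pow {ζ : R} {q d : ℕ}
    (hζ : IsPrimitiveRoot ζ q) (hd : d ∣ q) (hd0 : d ≠ 0) (n : ℕ) :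
    ∑ k ∈ Icc 1 q with d ∣ k, (ζ ^ n) ^ k = if q / d ∣ n then ((q / d : ℕ) : R) else 0 := by
  rw [sum_Icc_filter_dvd hd hd0, ← (hζ.pow_of_dvd hd0 hd).sum_Icc_pow_pow n]
  exact sum_congr rfl fun j _ => by ring

end RootsOfUnity

def unitaryPart (q : ℕ) (S : Finset ℕ) : ℕ := ∏ p ∈ S, ordProj[p] q

section UnitaryPart

variable {q : ℕ} {S : Finset ℕ}

theorem unitaryPart_pos (q : ℕ) (S : Finset ℕ) : 0 < unitaryPart q S :=
  prod_pos fun p _ => Nat.ordProj_pos q p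

theorem factorization_unitaryPart (hS : S ⊆ q.primeFactors) (r : ℕ) :
    (unitaryPart q S).factorization r = if r ∈ S then q.factorization r else 0 := by
  rw [unitaryPart, Nat.factorization_prod fun p _ => (Nat.ordProj_pos q p).ne',
    Finset.sum_apply', Finset.sum_congr rfl fun p hp =>
      congrArg (· r) (Nat.prime_of_mem_primeFactors (hS hp)).factorization_pow]
  simp only [Finsupp.single_apply, sum_ite_eq']

theorem primeFactors_unitaryPart (hS : S ⊆ q.primeFactors) :
    (unitaryPart q S).primeFactors = S := by
  ext r
  rw [← Nat.support_factorization, Finsupp.mem_support_iff, factorization_unitaryPart hS]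
  split_ifs with hr
  · exact iff_of_true (Finsupp.mem_support_iff.1 (hS hr)) hr
  · exact iff_of_false (not_not.2 rfl) hr

theorem factorization_unitaryPart_of_mem (hS : S ⊆ q.primeFactors) {p : ℕ} (hp : p ∈ S) :
    (unitaryPart q S).factorization p = q.factorization p := by
  rw [factorization_unitaryPart hS, if_pos hp]

theorem unitaryPart_dvd_iff (hS : S ⊆ q.primeFactors) {k : ℕ} :
    unitaryPart q S ∣ k ↔ ∀ p ∈ S, ordProj[p] q ∣ k := by
  rcases eq_or_ne k 0 with rfl | hk
  · simp
  have hpow (p) (hp : p ∈ S) :=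
    (Nat.prime_of_mem_primeFactors (hS hp)).pow_dvd_iff_le_factorization (k := q.factorization p) hk
  rw [← Nat.factorization_le_iff_dvd (unitaryPart_pos q S).ne' hk]
  refine ⟨fun h p hp => (hpow p hp).2 ?_, fun h r => ?_⟩
  · simpa [factorization_unitaryPart hS, hp] using h p
  · rw [factorization_unitaryPart hS]
    split_ifs with hr
    exacts [(hpow r hr).1 (h r hr), zero_le]

theorem unitaryPart_eq_one_iff (hS : S ⊆ q.primeFactors) : unitaryPart q S = 1 ↔ S = ∅ := by
  refine ⟨fun h => ?_, fun h => h ▸ prod_empty⟩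
  rw [← primeFactors_unitaryPart hS, h, Nat.primeFactors_one]

theorem unitaryPart_primeFactors (hq : q ≠ 0) : unitaryPart q q.primeFactors = q :=
  (Nat.prod_primeFactors_pow_factorization hq).symm

theorem unitaryPart_mul_unitaryPart_sdiff (hq : q ≠ 0) (hS : S ⊆ q.primeFactors) :
    unitaryPart q S * unitaryPart q (q.primeFactors \ S) = q := by
  rw [unitaryPart, unitaryPart, ← prod_union disjoint_sdiff, union_sdiff_of_subset hS]
  exact unitaryPart_primeFactors hq

theorem div_unitaryPart (hq : q ≠ 0) (hS : S ⊆ q.primeFactors) :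
    q / unitaryPart q S = unitaryPart q (q.primeFactors \ S) :=
  Nat.div_eq_of_eq_mul_right (unitaryPart_pos q S) (unitaryPart_mul_unitaryPart_sdiff hq hS).symm

theorem coprime_unitaryPart_div (hq : q ≠ 0) (hS : S ⊆ q.primeFactors) :
    Nat.Coprime (unitaryPart q S) (q / unitaryPart q S) := by
  rw [div_unitaryPart hq hS, ← Nat.disjoint_primeFactors (unitaryPart_pos q _).ne'
    (unitaryPart_pos q _).ne', primeFactors_unitaryPart hS, primeFactors_unitaryPart sdiff_subset]
  exact disjoint_sdiff

theorem unitaryPart_primeFactors_of_coprime {d : ℕ} (hq : q ≠ 0) (hd : d ∣ q)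
    (hco : Nat.Coprime d (q / d)) : unitaryPart q d.primeFactors = d := by
  conv_rhs => rw [Nat.prod_primeFactors_pow_factorization (ne_zero_of_dvd_ne_zero hq hd)]
  refine prod_congr rfl fun p hp => ?_
  rw [← Nat.mul_div_cancel' hd, Nat.factorization_eq_of_coprime_left hco
    (Nat.mem_primeFactors_iff_mem_primeFactorsList.1 hp)]

theorem unitaryDivisors_eq_image (hq : q ≠ 0) :
    unitaryDivisors q = q.primeFactors.powerset.image (unitaryPart q) := by
  ext d
  simp only [unitaryDivisors, mem_filter, Nat.mem_divisors, mem_image, mem_powerset]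
  constructor
  · rintro ⟨⟨hd, -⟩, hco⟩
    exact ⟨d.primeFactors, Nat.primeFactors_mono hd hq,
      unitaryPart_primeFactors_of_coprime hq hd hco⟩
  · rintro ⟨S, hS, rfl⟩
    exact ⟨⟨Dvd.intro _ (unitaryPart_mul_unitaryPart_sdiff hq hS), hq⟩,
      coprime_unitaryPart_div hq hS⟩

theorem unitaryPart_injOn : Set.InjOn (unitaryPart q) q.primeFactors.powerset := by
  intro S hS T hT h
  rw [← primeFactors_unitaryPart (mem_powerset.1 hS), h,
    primeFactors_unitaryPart (mem_powerset.1 hT)]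

theorem ite_unitaryPart_dvd_eq_prod {R : Type*} [CommSemiring R] (hS : S ⊆ q.primeFactors)
    (n : ℕ) :
    (if unitaryPart q S ∣ n then (unitaryPart q S : R) else 0)
      = ∏ p ∈ S, if ordProj[p] q ∣ n then (ordProj[p] q : R) else 0 := by
  simp only [unitaryPart_dvd_iff hS]
  rw [prod_ite_zero, unitaryPart, Nat.cast_prod]
  simp only [Nat.cast_pow]

end UnitaryPart

def ugcdPrimes (q n : ℕ) : Finset ℕ := {p ∈ q.primeFactors | ordProj[p] q ∣ n}

theorem ugcdPrimes_subset (q n : ℕ) : ugcdPrimes q n ⊆ q.primeFactors := filter_subset _ _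

theorem ugcd_eq_unitaryPart {q : ℕ} (hq : q ≠ 0) (n : ℕ) :
    ugcd n q = unitaryPart q (ugcdPrimes q n) := by
  have hN := ugcdPrimes_subset q n
  apply le_antisymm
  · refine Finset.sup_le fun d hd => ?_
    obtain ⟨hdq, hdn, hco⟩ := mem_filter.1 hd
    have hd : d ∈ unitaryDivisors q := mem_filter.2 ⟨hdq, hco⟩
    rw [unitaryDivisors_eq_image hq] at hd
    obtain ⟨S, hS, rfl⟩ := mem_image.1 hd
    have hSN : S ⊆ ugcdPrimes q n := fun p hp => mem_filter.2
      ⟨mem_powerset.1 hS hp, (unitaryPart_dvd_iff (mem_powerset.1 hS)).1 hdn p hp⟩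
    exact Nat.le_of_dvd (unitaryPart_pos _ _) (prod_dvd_prod_of_subset _ _ _ hSN)
  · have hd : unitaryPart q (ugcdPrimes q n) ∈ unitaryDivisors q := by
      rw [unitaryDivisors_eq_image hq]
      exact mem_image_of_mem _ (mem_powerset.2 hN)
    refine le_sup (f := id) (mem_filter.2 ⟨(mem_filter.1 hd).1, ?_, (mem_filter.1 hd).2⟩)
    exact (unitaryPart_dvd_iff hN).2 fun p hp => (mem_filter.1 hp).2

theorem ugcd_eq_one_iff {q : ℕ} (hq : q ≠ 0) (k : ℕ) :
    ugcd k q = 1 ↔ ∀ p ∈ q.primeFactors, ¬ ordProj[p] q ∣ k := by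
  rw [ugcd_eq_unitaryPart hq, unitaryPart_eq_one_iff (ugcdPrimes_subset q k), ugcdPrimes,
    filter_eq_empty_iff]

theorem ite_ugcd_eq_one_eq_sum {R : Type*} [CommRing R] {q : ℕ} (hq : q ≠ 0) (k : ℕ) :
    (if ugcd k q = 1 then 1 else 0 : R)
      = ∑ S ∈ q.primeFactors.powerset, (-1) ^ S.card * if unitaryPart q S ∣ k then 1 else 0 := by
  have hsubset (S) (hS : S ∈ q.primeFactors.powerset) :
      (-1) ^ S.card * (if unitaryPart q S ∣ k then 1 else 0 : R)
        = ∏ p ∈ S, -if ordProj[p] q ∣ k then 1 else 0 := by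
    simp only [prod_neg, prod_boole, unitaryPart_dvd_iff (mem_powerset.1 hS)]
  have hfactor (p : ℕ) :
      (1 + -if ordProj[p] q ∣ k then 1 else 0 : R) = if ¬ ordProj[p] q ∣ k then 1 else 0 := by
    split_ifs <;> simp
  rw [sum_congr rfl hsubset, ← prod_one_add]
  simp only [hfactor, prod_boole, ugcd_eq_one_iff hq]

theorem IsPrimitiveRoot.sum_ite_ugcd_eq_one_pow_pow {R : Type*} [CommRing R] [IsDomain R]
    {ζ : R} {q : ℕ} (hζ : IsPrimitiveRoot ζ q) (hq : q ≠ 0) (n : ℕ) :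
    ∑ k ∈ Icc 1 q, (if ugcd k q = 1 then (ζ ^ n) ^ k else 0)
      = ∏ p ∈ q.primeFactors, ((if ordProj[p] q ∣ n then (ordProj[p] q : R) else 0) - 1) := by
  have hind (w : R) (k : ℕ) : (if ugcd k q = 1 then w ^ k else 0) =
      ∑ S ∈ q.primeFactors.powerset, (-1) ^ S.card * if unitaryPart q S ∣ k then w ^ k else 0 := by
    rw [← boole_mul, ite_ugcd_eq_one_eq_sum hq, sum_mul]
    simp only [mul_assoc, boole_mul]
  calc ∑ k ∈ Icc 1 q, (if ugcd k q = 1 then (ζ ^ n) ^ k else 0)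
      = ∑ S ∈ q.primeFactors.powerset,
          (-1) ^ S.card * ∑ k ∈ Icc 1 q with unitaryPart q S ∣ k, (ζ ^ n) ^ k := by
        rw [sum_congr rfl fun k _ => hind _ k, sum_comm]
        simp only [← mul_sum, sum_filter]
    _ = ∑ S ∈ q.primeFactors.powerset, (∏ p ∈ S, (-1)) *
          ∏ p ∈ q.primeFactors \ S, if ordProj[p] q ∣ n then (ordProj[p] q : R) else 0 := by
        refine sum_congr rfl fun S hS => ?_
        have hS := mem_powerset.1 hS
        rw [hζ.sum_Icc_filter_dvd_pow_pow (Dvd.intro _ (unitaryPart_mul_unitaryPart_sdiff hq hS))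
          (unitaryPart_pos q S).ne', div_unitaryPart hq hS,
          ite_unitaryPart_dvd_eq_prod sdiff_subset, prod_const]
    _ = _ := by
        rw [← prod_add]
        exact prod_congr rfl fun p _ => neg_add_eq_sub _ _

theorem cstar_eq_sum_pow (q n : ℕ) :
    cstar q n = ∑ k ∈ Icc 1 q, if ugcd k q = 1 then (exp (2 * Real.pi * I / q) ^ n) ^ k else 0 := by
  refine sum_congr rfl fun k _ => ?_
  rw [← pow_mul, ← Complex.exp_nat_mul]
  congr 2
  push_cast
  ring

theorem cstar_eq_prod {q : ℕ} (hq : q ≠ 0) (n : ℕ) :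
    cstar q n =
      ∏ p ∈ q.primeFactors, ((if ordProj[p] q ∣ n then (ordProj[p] q : ℂ) else 0) - 1) := by
  rw [cstar_eq_sum_pow, (isPrimitiveRoot_exp q hq).sum_ite_ugcd_eq_one_pow_pow hq]

theorem norm_ite_natCast_sub_one {m : ℕ} (hm : 1 ≤ m) (c : Prop) [Decidable c] :
    ‖(if c then (m : ℂ) else 0) - 1‖ = if c then (m : ℝ) - 1 else 1 := by
  split_ifs
  · have hcast : (m : ℂ) - 1 = ((m - 1 : ℕ) : ℂ) := by push_cast [Nat.cast_sub hm]; ring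
    rw [hcast, Complex.norm_natCast, Nat.cast_sub hm, Nat.cast_one]
  · simp

theorem norm_cstar_unitaryPart {q : ℕ} {S : Finset ℕ} (hS : S ⊆ q.primeFactors) (n : ℕ) :
    ‖cstar (unitaryPart q S) n‖
      = ∏ p ∈ S, if ordProj[p] q ∣ n then (ordProj[p] q : ℝ) - 1 else 1 := by
  rw [cstar_eq_prod (unitaryPart_pos q S).ne', norm_prod, primeFactors_unitaryPart hS]
  refine prod_congr rfl fun p hp => ?_
  rw [factorization_unitaryPart_of_mem hS hp]
  exact_mod_cast norm_ite_natCast_sub_one (Nat.ordProj_pos q p) _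

theorem stmt7_general (q n : ℕ) (hq : 1 ≤ q) :
    ∑ d ∈ unitaryDivisors q, ‖cstar d n‖
      = 2 ^ omega (q / ugcd n q) * (ugcd n q : ℝ) := by
  have hq0 : q ≠ 0 := Nat.one_le_iff_ne_zero.1 hq
  have hN := ugcdPrimes_subset q n
  rw [unitaryDivisors_eq_image hq0, sum_image unitaryPart_injOn, ugcd_eq_unitaryPart hq0,
    div_unitaryPart hq0 hN, omega, primeFactors_unitaryPart sdiff_subset]
  calc ∑ S ∈ q.primeFactors.powerset, ‖cstar (unitaryPart q S) n‖
      = ∏ p ∈ q.primeFactors, (1 + if ordProj[p] q ∣ n then (ordProj[p] q : ℝ) - 1 else 1) := by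
        rw [prod_one_add]
        exact sum_congr rfl fun S hS => norm_cstar_unitaryPart (mem_powerset.1 hS) n
    _ = ∏ p ∈ q.primeFactors, if ordProj[p] q ∣ n then (ordProj[p] q : ℝ) else 2 := by
        refine prod_congr rfl fun p _ => ?_
        split_ifs <;> ring
    _ = _ := by
        rw [prod_ite, prod_const, filter_not, unitaryPart, Nat.cast_prod, mul_comm]
        simp only [ugcdPrimes, Nat.cast_pow]

theorem stmt7 (q n : ℕ) (hq : 1 ≤ q) (hn : 1 ≤ n) :
    ∑ d ∈ unitaryDivisors q, ‖cstar d n‖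
      = 2 ^ omega (q / ugcd n q) * (ugcd n q : ℝ) :=
  stmt7_general q n hq
end
end

section
/- For any q₁, q₂, n ∈ ℕ with lcm(q₁,q₂) ∣ n, (1/n) Σ_{k=1}^{n} c_{q₁}(k) c_{q₂}(k) equals φ(q) if q₁ = q₂ = q, and 0 if q₁ ≠ q₂. -/
/-! The classical Ramanujan sum `c_q(k)` is the sum of the `k`-th powers of the primitive `q`-th
roots of unity. Expanding the product and summing over `k` first, `∑_{k=1}^n (ξη)^k` is `n` or `0`
according as `ξη = 1`, because `(ξη)^n = 1`. The inverse of a primitive `q₁`-th root is again a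
primitive `q₁`-th root, so `ξη = 1` forces `q₁ = q₂`, and then every `ξ` has exactly one partner
`η = ξ⁻¹`: there are `φ(q)` such pairs. -/

open Complex Finset

noncomputable section

theorem Finset.sum_Icc_one_eq_sum_range_of_eq {M : Type*} [AddCommMonoid M] (g : ℕ → M) (q : ℕ)
    (h : g q = g 0) : ∑ a ∈ Icc 1 q, g a = ∑ a ∈ range q, g a := by
  rcases Nat.eq_zero_or_pos q with rfl | hq
  · simp
  rw [← Finset.Ico_add_one_right_eq_Icc, sum_Ico_succ_top hq, h, range_eq_Ico,
    sum_eq_sum_Ico_succ_bot hq, add_comm]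

theorem sum_Icc_pow_of_pow_eq_one {R : Type*} [CommRing R] [IsDomain R] [DecidableEq R]
    {z : R} {n : ℕ} (hz : z ^ n = 1) : ∑ k ∈ Icc 1 n, z ^ k = if z = 1 then (n : R) else 0 := by
  split_ifs with h
  · simp [h]
  refine (mul_eq_zero.mp ?_).resolve_right (sub_ne_zero.mpr h)
  rw [← Finset.Ico_add_one_right_eq_Icc, geom_sum_Ico_mul z (by omega), pow_succ, hz]
  ring

namespace IsPrimitiveRoot

variable {R : Type*} [CommRing R] [IsDomain R]

theorem sum_filter_coprime_range_pow {M : Type*} [AddCommMonoid M] {ζ : R} {q : ℕ}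
    (hζ : IsPrimitiveRoot ζ q) (f : R → M) :
    ∑ a ∈ (range q).filter (fun a => a.Coprime q), f (ζ ^ a) = ∑ ξ ∈ primitiveRoots q R, f ξ := by
  rcases Nat.eq_zero_or_pos q with rfl | hq
  · simp
  have : NeZero q := ⟨hq.ne'⟩
  refine sum_nbij (ζ ^ ·) ?_ ?_ ?_ (fun _ _ => rfl)
  · intro a ha
    rw [mem_primitiveRoots hq]
    exact hζ.pow_of_coprime a (mem_filter.mp ha).2
  · intro a ha b hb hab
    simp only [coe_filter, mem_range, Set.mem_ofPred_eq] at ha hb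
    exact hζ.pow_inj ha.1 hb.1 hab
  · intro ξ hξ
    obtain ⟨a, ha, hcop, rfl⟩ := hζ.isPrimitiveRoot_iff.mp ((mem_primitiveRoots hq).mp hξ)
    exact ⟨a, by simpa using ⟨ha, hcop⟩, rfl⟩

end IsPrimitiveRoot

theorem cc_eq_sum_primitiveRoots_pow {q : ℕ} (hq : 0 < q) (n : ℕ) :
    cc q n = ∑ ξ ∈ primitiveRoots q ℂ, ξ ^ n := by
  set ζ := Complex.exp (2 * Real.pi * Complex.I / q)
  have hζ : IsPrimitiveRoot ζ q := Complex.isPrimitiveRoot_exp q hq.ne'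
  have hexp (k : ℕ) : Complex.exp (2 * Real.pi * Complex.I * k * n / q) = (ζ ^ k) ^ n := by
    rw [← pow_mul, ← Complex.exp_nat_mul]
    push_cast
    ring_nf
  simp only [cc, hexp]
  rw [sum_Icc_one_eq_sum_range_of_eq _ _ (by simp [hζ.pow_eq_one]),
    ← sum_filter, hζ.sum_filter_coprime_range_pow (· ^ n)]

section

variable {K : Type*} [Field K] [DecidableEq K]

theorem sum_primitiveRoots_ite_mul_eq_one {M : Type*} [AddCommMonoid M]
    {q₁ q₂ : ℕ} (hq₁ : 0 < q₁) (hq₂ : 0 < q₂) (c : M) :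
    ∑ ξ ∈ primitiveRoots q₁ K, ∑ η ∈ primitiveRoots q₂ K, (if ξ * η = 1 then c else 0)
      = if q₁ = q₂ then #(primitiveRoots q₁ K) • c else 0 := by
  have hinner : ∀ ξ ∈ primitiveRoots q₁ K,
      ∑ η ∈ primitiveRoots q₂ K, (if ξ * η = 1 then c else 0) = if q₁ = q₂ then c else 0 := by
    intro ξ hξ
    have hξ : IsPrimitiveRoot ξ q₁ := (mem_primitiveRoots hq₁).mp hξ
    have hξ0 : ξ ≠ 0 := hξ.ne_zero hq₁.ne'
    simp only [mul_comm ξ, mul_eq_one_iff_eq_inv₀ hξ0, sum_ite_eq']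
    refine if_congr ⟨fun h => hξ.inv.unique ((mem_primitiveRoots hq₂).mp h), fun h => ?_⟩ rfl rfl
    exact (mem_primitiveRoots hq₂).mpr (h ▸ hξ.inv)
  rw [sum_congr rfl hinner]
  split_ifs <;> simp

theorem sum_Icc_sum_primitiveRoots_pow_mul {q₁ q₂ n : ℕ} (hq₁ : 0 < q₁) (hq₂ : 0 < q₂)
    (h₁ : q₁ ∣ n) (h₂ : q₂ ∣ n) :
    ∑ k ∈ Icc 1 n, (∑ ξ ∈ primitiveRoots q₁ K, ξ ^ k) * (∑ η ∈ primitiveRoots q₂ K, η ^ k)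
      = if q₁ = q₂ then #(primitiveRoots q₁ K) • (n : K) else 0 := by
  have hgeom : ∀ ξ ∈ primitiveRoots q₁ K, ∀ η ∈ primitiveRoots q₂ K,
      ∑ k ∈ Icc 1 n, (ξ * η) ^ k = if ξ * η = 1 then (n : K) else 0 := by
    intro ξ hξ η hη
    refine sum_Icc_pow_of_pow_eq_one ?_
    rw [mul_pow, ((mem_primitiveRoots hq₁).mp hξ).pow_eq_one_iff_dvd n |>.mpr h₁,
      ((mem_primitiveRoots hq₂).mp hη).pow_eq_one_iff_dvd n |>.mpr h₂, one_mul]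
  simp_rw [sum_mul_sum, ← mul_pow]
  rw [sum_comm, ← sum_primitiveRoots_ite_mul_eq_one hq₁ hq₂]
  refine sum_congr rfl fun ξ hξ => ?_
  rw [sum_comm]
  exact sum_congr rfl fun η hη => hgeom ξ hξ η hη

end

theorem stmt12_general (q₁ q₂ n : ℕ) (hn : 1 ≤ n)
    (hd : Nat.lcm q₁ q₂ ∣ n) :
    (1 / (n : ℂ)) * ∑ k ∈ Finset.Icc 1 n, cc q₁ k * cc q₂ k
      = if q₁ = q₂ then (Nat.totient q₁ : ℂ) else 0 := by
  have h₁ : q₁ ∣ n := (Nat.dvd_lcm_left q₁ q₂).trans hd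
  have h₂ : q₂ ∣ n := (Nat.dvd_lcm_right q₁ q₂).trans hd
  have hq₁ : 0 < q₁ := Nat.pos_of_dvd_of_pos h₁ hn
  have hq₂ : 0 < q₂ := Nat.pos_of_dvd_of_pos h₂ hn
  have hn0 : (n : ℂ) ≠ 0 := by exact_mod_cast (by omega : n ≠ 0)
  simp only [cc_eq_sum_primitiveRoots_pow hq₁, cc_eq_sum_primitiveRoots_pow hq₂]
  rw [sum_Icc_sum_primitiveRoots_pow_mul hq₁ hq₂ h₁ h₂, Complex.card_primitiveRoots]
  split_ifs
  · rw [nsmul_eq_mul]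
    field_simp
  · simp

theorem stmt12 (q₁ q₂ n : ℕ) (hq₁ : 1 ≤ q₁) (hq₂ : 1 ≤ q₂) (hn : 1 ≤ n)
    (hd : Nat.lcm q₁ q₂ ∣ n) :
    (1 / (n : ℂ)) * ∑ k ∈ Finset.Icc 1 n, cc q₁ k * cc q₂ k
      = if q₁ = q₂ then (Nat.totient q₁ : ℂ) else 0 :=
  stmt12_general q₁ q₂ n hn hd
end
end

section
/- Let g : ℕ → ℂ satisfy Σ_{n ≥ 1} 2^{k·ω(n)} |(μ*g)(n)| / n^k < ∞ for a fixed k ∈ ℕ. Then for all n₁,…,n_k ∈ ℕ, g(gcd(n₁,…,n_k)) = Σ_{q₁,…,q_k ≥ 1} a_{q₁,…,q_k} c_{q₁}(n₁)⋯c_{q_k}(n_k), absolutely convergent, where a_{q₁,…,q_k} = (1/Q^k) Σ_{m ≥ 1} (μ*g)(mQ)/m^k with Q = lcm(q₁,…,q_k). -/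
/-!
Möbius inversion gives `g (gcd n) = ∑_{d ∣ gcd n} (μ * g) d`, and the Ramanujan sums satisfy
`∑_{q ∣ d} c_q(a) = d · [d ∣ a]`, hence
`g (gcd n) = ∑_d (μ * g) d / d^k · ∏_i ∑_{q_i ∣ d} c_{q_i}(n_i)`.
From `c_q(a) = ∑_{e ∣ q} μ(q/e) · e · [e ∣ a]` one gets `∑_{q ∣ d} |c_q(a)| ≤ σ(a) · 2^ω(d)`, so the
hypothesis makes this double series over `(d, q)` absolutely convergent. Substituting
`d = m · lcm q` and summing over `m` first yields the coefficients.
-/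

open Complex Finset

noncomputable section

/-- The Dirichlet convolution `μ * g` of the Möbius function with `g`. -/
def mconv (g : ℕ → ℂ) (n : ℕ) : ℂ :=
  ∑ d ∈ n.divisors, (ArithmeticFunction.moebius d : ℂ) * g (n / d)

open ArithmeticFunction
open scoped ArithmeticFunction.Moebius ArithmeticFunction.sigma

lemma sum_Icc_pow_eq_zero_s14 {K : Type*} [DivisionRing K] {z : K} {d : ℕ} (hz : z ^ d = 1) (hz1 : z ≠ 1) :
    ∑ j ∈ Icc 1 d, z ^ j = 0 := by
  have hgeom : ∑ j ∈ range d, z ^ j = 0 := by rw [geom_sum_eq hz1, hz, sub_self, zero_div]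
  rw [← Finset.Ico_add_one_right_eq_Icc, sum_Ico_eq_sum_range]
  simp [pow_succ', ← mul_sum, add_comm 1, hgeom]

lemma sum_Icc_exp_eq_ite_dvd (d n : ℕ) (hd : 0 < d) :
    ∑ j ∈ Icc 1 d, exp (2 * Real.pi * I * j * n / d) = if d ∣ n then (d : ℂ) else 0 := by
  set ζ := exp (2 * Real.pi * I / d)
  have hζ : IsPrimitiveRoot ζ d := Complex.isPrimitiveRoot_exp d hd.ne'
  have hpow (j : ℕ) : exp (2 * Real.pi * I * j * n / d) = (ζ ^ n) ^ j := by
    rw [← pow_mul, ← exp_nat_mul]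
    push_cast
    ring_nf
  have hζn : (ζ ^ n) ^ d = 1 := by rw [← pow_mul, mul_comm, pow_mul, hζ.pow_eq_one, one_pow]
  simp only [hpow]
  split_ifs with hdn
  · simp [(hζ.pow_eq_one_iff_dvd n).mpr hdn]
  · exact sum_Icc_pow_eq_zero_s14 hζn (mt (hζ.pow_eq_one_iff_dvd n).mp hdn)

lemma sum_divisors_sum_coprime_eq_sum_Icc {M : Type*} [AddCommMonoid M] (F : ℚ → M) {d : ℕ}
    (hd : 0 < d) :
    ∑ q ∈ d.divisors, ∑ k ∈ Icc 1 q with k.Coprime q, F (k / q) = ∑ m ∈ Icc 1 d, F (m / d) := by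
  rw [sum_sigma']
  -- `m / d` in lowest terms is `(m / gcd m d) / (d / gcd m d)`
  refine sum_nbij' (fun p => p.2 * (d / p.1)) (fun m => ⟨d / m.gcd d, m / m.gcd d⟩)
    ?_ ?_ ?_ ?_ ?_
  · rintro ⟨q, k⟩ hqk
    simp only [mem_sigma, Nat.mem_divisors, mem_filter, mem_Icc] at hqk ⊢
    obtain ⟨⟨hqd, -⟩, ⟨hk1, hkq⟩, -⟩ := hqk
    have hdq : 0 < d / q := Nat.div_pos (Nat.le_of_dvd hd hqd) (by omega)
    refine ⟨Nat.mul_pos hk1 hdq, ?_⟩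
    calc k * (d / q) ≤ q * (d / q) := Nat.mul_le_mul_right _ hkq
      _ = d := Nat.mul_div_cancel' hqd
  · intro m hm
    simp only [mem_sigma, Nat.mem_divisors, mem_filter, mem_Icc] at hm ⊢
    have hg : 0 < m.gcd d := Nat.gcd_pos_of_pos_right m hd
    exact ⟨⟨Nat.div_dvd_of_dvd (Nat.gcd_dvd_right m d), hd.ne'⟩,
      ⟨Nat.div_pos (Nat.gcd_le_left d hm.1) hg, Nat.div_le_div_right hm.2⟩,
      Nat.coprime_div_gcd_div_gcd hg⟩
  · rintro ⟨q, k⟩ hqk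
    simp only [mem_sigma, Nat.mem_divisors, mem_filter, mem_Icc] at hqk
    obtain ⟨⟨hqd, -⟩, ⟨hk1, hkq⟩, hcop⟩ := hqk
    have hdq : 0 < d / q := Nat.div_pos (Nat.le_of_dvd hd hqd) (by omega)
    have hgcd : (k * (d / q)).gcd d = d / q := by
      calc (k * (d / q)).gcd d = (k * (d / q)).gcd (q * (d / q)) := by
            rw [Nat.mul_div_cancel' hqd]
        _ = d / q := by rw [Nat.gcd_mul_right, hcop, one_mul]
    ext
    · simp [hgcd, Nat.div_div_self hqd hd.ne']
    · simp [hgcd, Nat.mul_div_cancel k hdq]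
  · intro m _
    simp only [Nat.div_div_self (Nat.gcd_dvd_right m d) hd.ne']
    exact Nat.div_mul_cancel (Nat.gcd_dvd_left m d)
  · rintro ⟨q, k⟩ hqk
    simp only [mem_sigma, Nat.mem_divisors] at hqk
    have hq : (q : ℚ) ≠ 0 := Nat.cast_ne_zero.mpr (Nat.pos_of_dvd_of_pos hqk.1.1 hd).ne'
    have hd' : (d : ℚ) ≠ 0 := Nat.cast_ne_zero.mpr hd.ne'
    congr 1
    rw [Nat.cast_mul, Nat.cast_div hqk.1.1 hq]
    field_simp

lemma sum_divisors_cc (d n : ℕ) (hd : 0 < d) :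
    ∑ q ∈ d.divisors, cc q n = if d ∣ n then (d : ℂ) else 0 := by
  have h := sum_divisors_sum_coprime_eq_sum_Icc (fun x : ℚ => exp (2 * Real.pi * I * x * n)) hd
  push_cast at h
  rw [← sum_Icc_exp_eq_ite_dvd d n hd]
  convert h using 2 with q - k
  · rw [cc, ← sum_filter]
    exact sum_congr rfl fun k _ => by ring_nf
  · ring_nf

lemma cc_eq_sum_divisorsAntidiagonal (q n : ℕ) (hq : 0 < q) :
    cc q n = ∑ x ∈ q.divisorsAntidiagonal, (μ x.1 : ℂ) * if x.2 ∣ n then (x.2 : ℂ) else 0 :=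
  (sum_eq_iff_sum_mul_moebius_eq.mp (fun d hd => sum_divisors_cc d n hd) q hq).symm

lemma sum_divisors_mconv (g : ℕ → ℂ) {n : ℕ} (hn : 0 < n) : ∑ d ∈ n.divisors, mconv g d = g n :=
  sum_eq_iff_sum_mul_moebius_eq.mpr
    (fun m _ => by rw [mconv, Nat.sum_divisorsAntidiagonal (fun a b => (μ a : ℂ) * g b)]) n hn

lemma sum_divisors_abs_moebius {d : ℕ} (hd : d ≠ 0) :
    ∑ s ∈ d.divisors, |(μ s : ℝ)| = 2 ^ omega d := by
  simp_rw [← Int.cast_abs, abs_moebius, apply_ite (Int.cast : ℤ → ℝ), Int.cast_one, Int.cast_zero,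
    ← sum_filter, Nat.sum_divisors_filter_squarefree hd, sum_const, card_powerset, Nat.factors_eq]
  simp only [nsmul_eq_mul, mul_one, Nat.cast_pow, Nat.cast_ofNat]
  rfl

lemma sum_divisors_norm_cc_le {d n : ℕ} (hd : 0 < d) (hn : 0 < n) :
    ∑ q ∈ d.divisors, ‖cc q n‖ ≤ σ 1 n * 2 ^ omega d := by
  set t : ℕ × ℕ → ℝ := fun x => |(μ x.1 : ℝ)| * if x.2 ∣ n then (x.2 : ℝ) else 0
  have ht : ∀ x, 0 ≤ t x := fun x => mul_nonneg (abs_nonneg _) (by split_ifs <;> positivity)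
  have hnorm : ∀ q ∈ d.divisors, ‖cc q n‖ ≤ ∑ x ∈ q.divisorsAntidiagonal, t x := by
    intro q hq
    rw [cc_eq_sum_divisorsAntidiagonal q n (Nat.pos_of_mem_divisors hq)]
    refine (norm_sum_le _ _).trans_eq (sum_congr rfl fun x _ => ?_)
    rw [norm_mul, Complex.norm_intCast, apply_ite norm, Complex.norm_natCast, norm_zero]
  have hsub : ∑ q ∈ d.divisors, ∑ x ∈ q.divisorsAntidiagonal, t x
      ≤ ∑ x ∈ d.divisors ×ˢ d.divisors, t x := by
    rw [← sum_biUnion fun a _ b _ hab => disjoint_left.mpr fun x hxa hxb =>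
      hab ((Nat.mem_divisorsAntidiagonal.mp hxa).1.symm.trans (Nat.mem_divisorsAntidiagonal.mp hxb).1)]
    refine sum_le_sum_of_subset_of_nonneg (fun x hx => ?_) fun x _ _ => ht x
    obtain ⟨q, hq, hxq⟩ := mem_biUnion.mp hx
    obtain ⟨hxq, -⟩ := Nat.mem_divisorsAntidiagonal.mp hxq
    have hqd := Nat.dvd_of_mem_divisors hq
    simp only [mem_product, Nat.mem_divisors]
    exact ⟨⟨(Dvd.intro _ hxq).trans hqd, hd.ne'⟩, ⟨(Dvd.intro_left _ hxq).trans hqd, hd.ne'⟩⟩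
  have hσ : ∑ e ∈ d.divisors, (if e ∣ n then (e : ℝ) else 0) ≤ σ 1 n := by
    rw [← sum_filter, sigma_one_apply, Nat.cast_sum]
    exact sum_le_sum_of_subset_of_nonneg
      (fun e he => Nat.mem_divisors.mpr ⟨(mem_filter.mp he).2, hn.ne'⟩) fun _ _ _ => by positivity
  calc ∑ q ∈ d.divisors, ‖cc q n‖
      ≤ ∑ x ∈ d.divisors ×ˢ d.divisors, t x := (sum_le_sum hnorm).trans hsub
    _ = (∑ e ∈ d.divisors, if e ∣ n then (e : ℝ) else 0) * ∑ s ∈ d.divisors, |(μ s : ℝ)| := by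
      rw [sum_product, sum_mul_sum, sum_comm]
      exact sum_congr rfl fun _ _ => sum_congr rfl fun _ _ => mul_comm _ _
    _ ≤ σ 1 n * 2 ^ omega d := by
      rw [sum_divisors_abs_moebius hd.ne']
      exact mul_le_mul_of_nonneg_right hσ (by positivity)

lemma hasSum_prod_of_finset_fibers {α β E : Type*} [NormedAddCommGroup E] [CompleteSpace E]
    {f : α × β → E} (S : α → Finset β) (hf : ∀ a, ∀ b ∉ S a, f (a, b) = 0)
    (hnorm : Summable fun a => ∑ b ∈ S a, ‖f (a, b)‖) {e : E}
    (he : HasSum (fun a => ∑ b ∈ S a, f (a, b)) e) : HasSum f e := by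
  have hfib (a : α) : HasSum (fun b => f (a, b)) (∑ b ∈ S a, f (a, b)) :=
    hasSum_sum_of_ne_finset_zero (hf a)
  have hnorm_fib (a : α) : ∀ b ∉ S a, ‖f (a, b)‖ = 0 := fun b hb => by rw [hf a b hb, norm_zero]
  have hsum : Summable f := Summable.of_norm <|
    (summable_prod_of_nonneg fun _ => norm_nonneg _).mpr
      ⟨fun a => summable_of_ne_finset_zero (hnorm_fib a),
        hnorm.congr fun a => (tsum_eq_sum (hnorm_fib a)).symm⟩
  simpa only [(hsum.hasSum.prod_fiberwise hfib).unique he] using hsum.hasSum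

def divisorsPNat (d : ℕ) : Finset ℕ+ :=
  d.divisors.preimage (↑) PNat.coe_injective.injOn

lemma mem_divisorsPNat {d : ℕ} (hd : d ≠ 0) {e : ℕ+} : e ∈ divisorsPNat d ↔ (e : ℕ) ∣ d := by
  simp [divisorsPNat, hd]

lemma sum_divisorsPNat {M : Type*} [AddCommMonoid M] (d : ℕ) (h : ℕ → M) :
    ∑ e ∈ divisorsPNat d, h e = ∑ e ∈ d.divisors, h e :=
  sum_preimage _ _ _ _ fun x hx hr => (hr ⟨⟨x, Nat.pos_of_mem_divisors hx⟩, rfl⟩).elim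

lemma sum_piFinset_divisorsPNat_prod {ι M : Type*} [Fintype ι] [DecidableEq ι] [CommSemiring M]
    (d : ℕ) (c : ι → ℕ → M) :
    ∑ q ∈ Fintype.piFinset fun _ : ι => divisorsPNat d, ∏ i, c i (q i)
      = ∏ i, ∑ e ∈ d.divisors, c i e := by
  simp only [← sum_divisorsPNat d]
  exact (prod_univ_sum (fun _ => divisorsPNat d) fun i e => c i e).symm

def lcmPNat {ι : Type*} [Fintype ι] (q : ι → ℕ+) : ℕ+ :=
  ⟨univ.lcm fun i => (q i : ℕ), Nat.pos_of_ne_zero fun h => by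
    obtain ⟨i, -, hi⟩ := lcm_eq_zero_iff.mp h
    exact (q i).ne_zero hi⟩

lemma coe_lcmPNat {ι : Type*} [Fintype ι] (q : ι → ℕ+) :
    (lcmPNat q : ℕ) = univ.lcm fun i => (q i : ℕ) :=
  rfl

section RamanujanExpansion

variable {k : ℕ} (g : ℕ → ℂ) (n : Fin k → ℕ+)

def expansionTerm (p : ℕ+ × (Fin k → ℕ+)) : ℂ :=
  if ∀ i, (p.2 i : ℕ) ∣ p.1 then mconv g p.1 / (p.1 : ℂ) ^ k * ∏ i, cc (p.2 i) (n i) else 0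

lemma expansionTerm_of_notMem {d : ℕ+} {q : Fin k → ℕ+}
    (hq : q ∉ Fintype.piFinset fun _ => divisorsPNat d) : expansionTerm g n (d, q) = 0 :=
  if_neg fun h => hq (Fintype.mem_piFinset.mpr fun i => (mem_divisorsPNat d.ne_zero).mpr (h i))

lemma expansionTerm_of_mem {d : ℕ+} {q : Fin k → ℕ+}
    (hq : q ∈ Fintype.piFinset fun _ => divisorsPNat d) :
    expansionTerm g n (d, q) = mconv g d / (d : ℂ) ^ k * ∏ i, cc (q i) (n i) :=
  if_pos fun i => (mem_divisorsPNat d.ne_zero).mp (Fintype.mem_piFinset.mp hq i)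

lemma sum_expansionTerm (d : ℕ+) :
    ∑ q ∈ Fintype.piFinset (fun _ => divisorsPNat d), expansionTerm g n (d, q)
      = if (d : ℕ) ∣ univ.gcd (fun i => (n i : ℕ)) then mconv g d else 0 := by
  rw [sum_congr rfl fun q hq => expansionTerm_of_mem g n hq, ← mul_sum,
    sum_piFinset_divisorsPNat_prod d fun i e => cc e (n i)]
  simp only [fun i => sum_divisors_cc d (n i) d.pos, Fintype.prod_ite_zero, Finset.dvd_gcd_iff,
    mem_univ, true_implies]
  split_ifs
  · rw [prod_const, card_univ, Fintype.card_fin]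
    exact div_mul_cancel₀ _ (pow_ne_zero _ (Nat.cast_ne_zero.mpr d.ne_zero))
  · exact mul_zero _

lemma sum_norm_expansionTerm_le (d : ℕ+) :
    ∑ q ∈ Fintype.piFinset (fun _ => divisorsPNat d), ‖expansionTerm g n (d, q)‖
      ≤ (∏ i, (σ 1 (n i) : ℝ)) * ((2 : ℝ) ^ (k * omega d) * ‖mconv g d‖ / ((d : ℕ) : ℝ) ^ k) := by
  calc ∑ q ∈ Fintype.piFinset (fun _ => divisorsPNat d), ‖expansionTerm g n (d, q)‖
      = ‖mconv g d / (d : ℂ) ^ k‖ * ∏ i, ∑ e ∈ (d : ℕ).divisors, ‖cc e (n i)‖ := by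
        rw [← sum_piFinset_divisorsPNat_prod d fun i e => ‖cc e (n i)‖, mul_sum]
        refine sum_congr rfl fun q hq => ?_
        rw [expansionTerm_of_mem g n hq, norm_mul, norm_prod]
    _ ≤ ‖mconv g d / (d : ℂ) ^ k‖ * ∏ i, ((σ 1 (n i) : ℝ) * 2 ^ omega d) := by
        gcongr with i
        exact sum_divisors_norm_cc_le d.pos (n i).pos
    _ = _ := by
        rw [prod_mul_distrib, prod_const, card_univ, Fintype.card_fin, ← pow_mul, norm_div,
          norm_pow, Complex.norm_natCast, mul_comm k]
        ring

lemma hasSum_expansionTerm (hk : 1 ≤ k)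
    (hsum : Summable fun d : ℕ+ => (2 : ℝ) ^ (k * omega d) * ‖mconv g d‖ / ((d : ℕ) : ℝ) ^ k) :
    HasSum (expansionTerm g n) (g (univ.gcd fun i => (n i : ℕ))) := by
  have hnorm := (hsum.mul_left (∏ i, (σ 1 (n i) : ℝ))).of_nonneg_of_le
    (fun d => sum_nonneg fun _ _ => norm_nonneg _) (sum_norm_expansionTerm_le g n)
  refine hasSum_prod_of_finset_fibers (f := expansionTerm g n)
    (fun d => Fintype.piFinset fun _ => divisorsPNat d)
    (fun d q hq => expansionTerm_of_notMem g n hq) hnorm ?_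
  simp only [sum_expansionTerm]
  have hG : (univ.gcd fun i => (n i : ℕ)) ≠ 0 := fun h =>
    (n ⟨0, hk⟩).ne_zero (Finset.gcd_eq_zero_iff.mp h _ (mem_univ _))
  generalize univ.gcd (fun i => (n i : ℕ)) = G at hG ⊢
  have h : HasSum (fun d : ℕ+ => if (d : ℕ) ∣ G then mconv g d else 0)
      (∑ d ∈ divisorsPNat G, if (d : ℕ) ∣ G then mconv g d else 0) :=
    hasSum_sum_of_ne_finset_zero fun d hd => if_neg ((mem_divisorsPNat hG).not.mp hd)
  rwa [sum_divisorsPNat G fun d => if d ∣ G then mconv g d else 0,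
    sum_congr rfl fun d hd => if_pos (Nat.dvd_of_mem_divisors hd),
    sum_divisors_mconv g (Nat.pos_of_ne_zero hG)] at h

lemma hasSum_expansionTerm_lcm (hk : 1 ≤ k)
    (hsum : Summable fun d : ℕ+ => (2 : ℝ) ^ (k * omega d) * ‖mconv g d‖ / ((d : ℕ) : ℝ) ^ k) :
    HasSum (fun p : (Fin k → ℕ+) × ℕ+ =>
        1 / ((univ.lcm fun i => (p.1 i : ℕ) : ℕ) : ℂ) ^ k *
          (mconv g (p.2 * univ.lcm fun i => (p.1 i : ℕ)) / ((p.2 : ℕ) : ℂ) ^ k)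
        * ∏ i, cc (p.1 i) (n i))
      (g (univ.gcd fun i => (n i : ℕ))) := by
  set ψ : (Fin k → ℕ+) × ℕ+ → ℕ+ × (Fin k → ℕ+) := fun p => (p.2 * lcmPNat p.1, p.1)
  have hψ : Function.Injective ψ := fun p p' h => by
    simp only [ψ, Prod.mk.injEq] at h
    obtain ⟨h1, h2⟩ := h
    rw [h2] at h1
    exact Prod.ext h2 (mul_right_cancel h1)
  have hrange : ∀ x ∉ Set.range ψ, expansionTerm g n x = 0 := by
    rintro ⟨d, q⟩ hx
    refine if_neg fun hq => hx ?_
    have hL : (lcmPNat q : ℕ) ∣ d := coe_lcmPNat q ▸ Finset.lcm_dvd fun i _ => hq i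
    refine ⟨(q, ⟨d / lcmPNat q, Nat.div_pos (Nat.le_of_dvd d.pos hL) (lcmPNat q).pos⟩), ?_⟩
    simp only [ψ, Prod.mk.injEq, and_true]
    exact PNat.eq (Nat.div_mul_cancel hL)
  convert (hψ.hasSum_iff hrange).mpr (hasSum_expansionTerm g n hk hsum) using 1
  ext ⟨q, m⟩
  have hdvd (i : Fin k) : (q i : ℕ) ∣ (m : ℕ) * univ.lcm fun i => (q i : ℕ) :=
    (Finset.dvd_lcm (mem_univ i)).mul_left _
  simp only [Function.comp, ψ, expansionTerm, PNat.mul_coe, coe_lcmPNat, hdvd, implies_true,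
    if_true]
  have hL : ((univ.lcm fun i => (q i : ℕ) : ℕ) : ℂ) ≠ 0 :=
    Nat.cast_ne_zero.mpr (lcmPNat q).ne_zero
  push_cast
  field_simp
  ring

end RamanujanExpansion

theorem stmt14 (k : ℕ) (hk : 1 ≤ k) (g : ℕ → ℂ)
    (hsum : Summable (fun n : ℕ+ =>
      (2 : ℝ) ^ (k * omega n) * ‖mconv g n‖ / ((n : ℕ) : ℝ) ^ k)) :
    ∀ n : Fin k → ℕ+,
      HasSum (fun q : Fin k → ℕ+ =>
        ((1 / ((Finset.univ.lcm (fun i => ((q i : ℕ))) : ℕ) : ℂ) ^ k) *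
            ∑' m : ℕ+, mconv g ((m : ℕ) * Finset.univ.lcm (fun i => ((q i : ℕ)))) / ((m : ℕ) : ℂ) ^ k)
          * ∏ i, cc (q i) (n i))
        (g (Finset.univ.gcd (fun i => ((n i : ℕ))))) := by
  intro n
  have h := hasSum_expansionTerm_lcm g n hk hsum
  refine h.prod_fiberwise fun q => ?_
  have hq := (h.summable.prod_factor q).hasSum
  simp only at hq ⊢
  rwa [tsum_mul_right, tsum_mul_left] at hq
end
end
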